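/- arXiv:2505.14702 — 2 statements merged into one kernel-verified Lean document; each statement's English description precedes it below -/
import Mathlib

section
/- Let B₁, B₂, B₃ ∈ ℝ with B₁·B₂·B₃ ≠ 0 and let C ∈ ℝ³. Let e₁, e₂, e₃ denote the standard basis vectors of ℝ³ and × the cross product on ℝ³. Define the linear map L : (ℝ³)⁴ → (ℝ³)⁴ by L(φ¹,φ²,φ³,φ⁴) = ( −2(B₁ e₁×φ² + B₂ e₂×φ³ + B₃ e₃×φ⁴) + 2 C×φ¹ , 2(B₁ e₁×φ¹ + B₂ e₂×φ⁴ − B₃ e₃×φ³) + 2 C×φ² , 2(−B₁ e₁×φ⁴ + B₂ e₂×φ¹ + B₃ e₃×φ²) + 2 C×φ³ , 2(B₁ e₁×φ³ − B₂ e₂×φ² + B₃ e₃×φ¹) + 2 C×φ⁴ ). Then L is injective. -/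
set_option maxHeartbeats 2000000 in
/-- Coordinate form of Lemma 3 (Lemma BC): for `B₁ B₂ B₃ : ℝ` with `B₁ * B₂ * B₃ ≠ 0`
and `C : ℝ³`, the linear map `L` on `(ℝ³)⁴` given by
`L(φ¹,φ²,φ³,φ⁴) = (−2(B₁ e₁×φ² + B₂ e₂×φ³ + B₃ e₃×φ⁴) + 2 C×φ¹, ...)`
is injective. -/
theorem perturbed_VW_lemma_BC_injective
    (B₁ B₂ B₃ : ℝ) (hB : B₁ * B₂ * B₃ ≠ 0) (C : Fin 3 → ℝ) :
    Function.Injective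
      (fun φ : (Fin 3 → ℝ) × (Fin 3 → ℝ) × (Fin 3 → ℝ) × (Fin 3 → ℝ) =>
        ((-(2 : ℝ)) • (B₁ • crossProduct ![1, 0, 0] φ.2.1
            + B₂ • crossProduct ![0, 1, 0] φ.2.2.1
            + B₃ • crossProduct ![0, 0, 1] φ.2.2.2)
          + (2 : ℝ) • crossProduct C φ.1,
         (2 : ℝ) • (B₁ • crossProduct ![1, 0, 0] φ.1
            + B₂ • crossProduct ![0, 1, 0] φ.2.2.2
            - B₃ • crossProduct ![0, 0, 1] φ.2.2.1)
          + (2 : ℝ) • crossProduct C φ.2.1,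
         (2 : ℝ) • (-(B₁ • crossProduct ![1, 0, 0] φ.2.2.2)
            + B₂ • crossProduct ![0, 1, 0] φ.1
            + B₃ • crossProduct ![0, 0, 1] φ.2.1)
          + (2 : ℝ) • crossProduct C φ.2.2.1,
         (2 : ℝ) • (B₁ • crossProduct ![1, 0, 0] φ.2.2.1
            - B₂ • crossProduct ![0, 1, 0] φ.2.1
            + B₃ • crossProduct ![0, 0, 1] φ.1)
          + (2 : ℝ) • crossProduct C φ.2.2.2)) := by
  intro a b h
  obtain ⟨a1, a2, a3, a4⟩ := a
  obtain ⟨b1, b2, b3, b4⟩ := b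
  simp only [Prod.mk.injEq, cross_apply] at h
  obtain ⟨h1, h2, h3, h4⟩ := h
  have e0 := congrFun h1 0
  have e1 := congrFun h1 1
  have e2 := congrFun h1 2
  have e3 := congrFun h2 0
  have e4 := congrFun h2 1
  have e5 := congrFun h2 2
  have e6 := congrFun h3 0
  have e7 := congrFun h3 1
  have e8 := congrFun h3 2
  have e9 := congrFun h4 0
  have e10 := congrFun h4 1
  have e11 := congrFun h4 2
  simp only [Pi.add_apply, Pi.sub_apply, Pi.smul_apply, Pi.neg_apply, smul_eq_mul, Matrix.cons_val_zero, Matrix.cons_val_one, Matrix.head_cons, Matrix.cons_val_two, Matrix.tail_cons, Matrix.cons_val_fin_one, neg_mul, one_mul, zero_mul, mul_zero, mul_one] at e0 e1 e2 e3 e4 e5 e6 e7 e8 e9 e10 e11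
  have hQ : (0:ℝ) < (B₁*B₂*B₃)^2 + (B₂*B₃*C 0)^2 + (B₁*B₃*C 1)^2 + (B₁*B₂*C 2)^2 := by positivity
  have k0 : (4:ℝ) * ((B₁*B₂*B₃)^2 + (B₂*B₃*C 0)^2 + (B₁*B₃*C 1)^2 + (B₁*B₂*C 2)^2) * (a1 0 - b1 0) = 0 := by
    linear_combination (-(B₁) * (B₂) * (B₃) * (C 0)^2 - (B₁)^3 * (B₂) * (B₃)) * e0 + (-(B₁) * (B₂) * (B₃) * (C 0) * (C 1) + (B₁)^2 * (B₂)^2 * (C 2)) * e1 + (-(B₁) * (B₂) * (B₃) * (C 0) * (C 2) - (B₁)^2 * (B₃)^2 * (C 1)) * e2 + ((B₂) * (B₃) * (C 0)^3 + (B₁)^2 * (B₂) * (B₃) * (C 0)) * e3 + ((B₂) * (B₃) * (C 0)^2 * (C 1) - (B₁) * (B₂)^2 * (C 0) * (C 2)) * e4 + ((B₂) * (B₃) * (C 0)^2 * (C 2) + (B₁) * (B₃)^2 * (C 0) * (C 1)) * e5 + ((B₁) * (B₃) * (C 0)^2 * (C 1) + (B₁)^3 * (B₃) * (C 1)) * e6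 + ((B₁) * (B₃) * (C 0) * (C 1)^2 - (B₁)^2 * (B₂) * (C 1) * (C 2)) * e7 + (-(B₂) * (B₃)^2 * (C 0)^2 + (B₁) * (B₃) * (C 0) * (C 1) * (C 2) - (B₁)^2 * (B₂) * (C 2)^2 - (B₁)^2 * (B₂) * (B₃)^2) * e8 + ((B₁) * (B₂) * (C 0)^2 * (C 2) + (B₁)^3 * (B₂) * (C 2)) * e9 + ((B₂)^2 * (B₃) * (C 0)^2 + (B₁) * (B₂) * (C 0) * (C 1) * (C 2) + (B₁)^2 * (B₃) * (C 1)^2 + (B₁)^2 * (B₂)^2 * (B₃)) * e10 + ((B₁) * (B₂) * (C 0) * (C 2)^2 + (B₁)^2 * (B₃) * (C 1) * (C 2)) * e11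
  have g0 : a1 0 = b1 0 := by
    have := mul_eq_zero.mp k0
    rcases this with h' | h'
    · linarith
    · linarith
  have k1 : (4:ℝ) * ((B₁*B₂*B₃)^2 + (B₂*B₃*C 0)^2 + (B₁*B₃*C 1)^2 + (B₁*B₂*C 2)^2) * (a1 1 - b1 1) = 0 := by
    linear_combination (-(B₁) * (B₂) * (B₃) * (C 0) * (C 1) - (B₁)^2 * (B₂)^2 * (C 2)) * e0 + (-(B₁) * (B₂) * (B₃) * (C 1)^2 - (B₁) * (B₂)^3 * (B₃)) * e1 + ((B₂)^2 * (B₃)^2 * (C 0) - (B₁) * (B₂) * (B₃) * (C 1) * (C 2)) * e2 + ((B₂) * (B₃) * (C 0)^2 * (C 1) + (B₁) * (B₂)^2 * (C 0) * (C 2)) * e3 + ((B₂) * (B₃) * (C 0) * (C 1)^2 + (B₂)^3 * (B₃) * (C 0)) * e4 + ((B₂) * (B₃) * (C 0) * (C 1) * (C 2) + (B₁) * (B₃)^2 * (C 1)^2 + (B₁) * (B₂)^2 * (C 2)^2 + (B₁) * (B₂)^2 * (B₃)^2) * e5 + ((B₁) * (B₃) * (C 0) * (C 1)^2 + (B₁)^2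 * (B₂) * (C 1) * (C 2)) * e6 + ((B₁) * (B₃) * (C 1)^3 + (B₁) * (B₂)^2 * (B₃) * (C 1)) * e7 + (-(B₂) * (B₃)^2 * (C 0) * (C 1) + (B₁) * (B₃) * (C 1)^2 * (C 2)) * e8 + (-(B₂)^2 * (B₃) * (C 0)^2 + (B₁) * (B₂) * (C 0) * (C 1) * (C 2) - (B₁)^2 * (B₃) * (C 1)^2 - (B₁)^2 * (B₂)^2 * (B₃)) * e9 + ((B₁) * (B₂) * (C 1)^2 * (C 2) + (B₁) * (B₂)^3 * (C 2)) * e10 + (-(B₂)^2 * (B₃) * (C 0) * (C 2) + (B₁) * (B₂) * (C 1) * (C 2)^2) * e11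
  have g1 : a1 1 = b1 1 := by
    have := mul_eq_zero.mp k1
    rcases this with h' | h'
    · linarith
    · linarith
  have k2 : (4:ℝ) * ((B₁*B₂*B₃)^2 + (B₂*B₃*C 0)^2 + (B₁*B₃*C 1)^2 + (B₁*B₂*C 2)^2) * (a1 2 - b1 2) = 0 := by
    linear_combination (-(B₁) * (B₂) * (B₃) * (C 0) * (C 2) + (B₁)^2 * (B₃)^2 * (C 1)) * e0 + (-(B₂)^2 * (B₃)^2 * (C 0) - (B₁) * (B₂) * (B₃) * (C 1) * (C 2)) * e1 + (-(B₁) * (B₂) * (B₃) * (C 2)^2 - (B₁) * (B₂) * (B₃)^3) * e2 + ((B₂) * (B₃) * (C 0)^2 * (C 2) - (B₁) * (B₃)^2 * (C 0) * (C 1)) * e3 + ((B₂) * (B₃) * (C 0) * (C 1) * (C 2) - (B₁) * (B₃)^2 * (C 1)^2 - (B₁) * (B₂)^2 * (C 2)^2 - (B₁) * (B₂)^2 * (B₃)^2) * e4 + ((B₂) * (B₃) * (C 0) * (C 2)^2 + (B₂) * (B₃)^3 * (C 0)) * e5 + ((B₂) * (B₃)^2 * (C 0)^2 + (B₁) * (B₃)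 * (C 0) * (C 1) * (C 2) + (B₁)^2 * (B₂) * (C 2)^2 + (B₁)^2 * (B₂) * (B₃)^2) * e6 + ((B₂) * (B₃)^2 * (C 0) * (C 1) + (B₁) * (B₃) * (C 1)^2 * (C 2)) * e7 + ((B₁) * (B₃) * (C 1) * (C 2)^2 + (B₁) * (B₃)^3 * (C 1)) * e8 + ((B₁) * (B₂) * (C 0) * (C 2)^2 - (B₁)^2 * (B₃) * (C 1) * (C 2)) * e9 + ((B₂)^2 * (B₃) * (C 0) * (C 2) + (B₁) * (B₂) * (C 1) * (C 2)^2) * e10 + ((B₁) * (B₂) * (C 2)^3 + (B₁) * (B₂) * (B₃)^2 * (C 2)) * e11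
  have g2 : a1 2 = b1 2 := by
    have := mul_eq_zero.mp k2
    rcases this with h' | h'
    · linarith
    · linarith
  have k3 : (4:ℝ) * ((B₁*B₂*B₃)^2 + (B₂*B₃*C 0)^2 + (B₁*B₃*C 1)^2 + (B₁*B₂*C 2)^2) * (a2 0 - b2 0) = 0 := by
    linear_combination (-(B₂) * (B₃) * (C 0)^3 - (B₁)^2 * (B₂) * (B₃) * (C 0)) * e0 + (-(B₂) * (B₃) * (C 0)^2 * (C 1) + (B₁) * (B₂)^2 * (C 0) * (C 2)) * e1 + (-(B₂) * (B₃) * (C 0)^2 * (C 2) - (B₁) * (B₃)^2 * (C 0) * (C 1)) * e2 + (-(B₁) * (B₂) * (B₃) * (C 0)^2 - (B₁)^3 * (B₂) * (B₃)) * e3 + (-(B₁) * (B₂) * (B₃) * (C 0) * (C 1) + (B₁)^2 * (B₂)^2 * (C 2)) * e4 + (-(B₁) * (B₂) * (B₃) * (C 0) * (C 2) - (B₁)^2 * (B₃)^2 * (C 1)) * e5 + ((B₁) * (B₂) * (C 0)^2 * (C 2) + (B₁)^3 * (B₂) * (C 2)) * e6 + ((B₂)^2 * (B₃) * (C 0)^2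 + (B₁) * (B₂) * (C 0) * (C 1) * (C 2) + (B₁)^2 * (B₃) * (C 1)^2 + (B₁)^2 * (B₂)^2 * (B₃)) * e7 + ((B₁) * (B₂) * (C 0) * (C 2)^2 + (B₁)^2 * (B₃) * (C 1) * (C 2)) * e8 + (-(B₁) * (B₃) * (C 0)^2 * (C 1) - (B₁)^3 * (B₃) * (C 1)) * e9 + (-(B₁) * (B₃) * (C 0) * (C 1)^2 + (B₁)^2 * (B₂) * (C 1) * (C 2)) * e10 + ((B₂) * (B₃)^2 * (C 0)^2 - (B₁) * (B₃) * (C 0) * (C 1) * (C 2) + (B₁)^2 * (B₂) * (C 2)^2 + (B₁)^2 * (B₂) * (B₃)^2) * e11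
  have g3 : a2 0 = b2 0 := by
    have := mul_eq_zero.mp k3
    rcases this with h' | h'
    · linarith
    · linarith
  have k4 : (4:ℝ) * ((B₁*B₂*B₃)^2 + (B₂*B₃*C 0)^2 + (B₁*B₃*C 1)^2 + (B₁*B₂*C 2)^2) * (a2 1 - b2 1) = 0 := by
    linear_combination (-(B₂) * (B₃) * (C 0)^2 * (C 1) - (B₁) * (B₂)^2 * (C 0) * (C 2)) * e0 + (-(B₂) * (B₃) * (C 0) * (C 1)^2 - (B₂)^3 * (B₃) * (C 0)) * e1 + (-(B₂) * (B₃) * (C 0) * (C 1) * (C 2) - (B₁) * (B₃)^2 * (C 1)^2 - (B₁) * (B₂)^2 * (C 2)^2 - (B₁) * (B₂)^2 * (B₃)^2) * e2 + (-(B₁) * (B₂) * (B₃) * (C 0) * (C 1) - (B₁)^2 * (B₂)^2 * (C 2)) * e3 + (-(B₁) * (B₂) * (B₃) * (C 1)^2 - (B₁) * (B₂)^3 * (B₃)) * e4 + ((B₂)^2 * (B₃)^2 * (C 0) - (B₁) * (B₂) * (B₃) * (C 1) * (C 2)) * e5 + (-(B₂)^2 * (B₃) * (C 0)^2 + (B₁)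 * (B₂) * (C 0) * (C 1) * (C 2) - (B₁)^2 * (B₃) * (C 1)^2 - (B₁)^2 * (B₂)^2 * (B₃)) * e6 + ((B₁) * (B₂) * (C 1)^2 * (C 2) + (B₁) * (B₂)^3 * (C 2)) * e7 + (-(B₂)^2 * (B₃) * (C 0) * (C 2) + (B₁) * (B₂) * (C 1) * (C 2)^2) * e8 + (-(B₁) * (B₃) * (C 0) * (C 1)^2 - (B₁)^2 * (B₂) * (C 1) * (C 2)) * e9 + (-(B₁) * (B₃) * (C 1)^3 - (B₁) * (B₂)^2 * (B₃) * (C 1)) * e10 + ((B₂) * (B₃)^2 * (C 0) * (C 1) - (B₁) * (B₃) * (C 1)^2 * (C 2)) * e11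
  have g4 : a2 1 = b2 1 := by
    have := mul_eq_zero.mp k4
    rcases this with h' | h'
    · linarith
    · linarith
  have k5 : (4:ℝ) * ((B₁*B₂*B₃)^2 + (B₂*B₃*C 0)^2 + (B₁*B₃*C 1)^2 + (B₁*B₂*C 2)^2) * (a2 2 - b2 2) = 0 := by
    linear_combination (-(B₂) * (B₃) * (C 0)^2 * (C 2) + (B₁) * (B₃)^2 * (C 0) * (C 1)) * e0 + (-(B₂) * (B₃) * (C 0) * (C 1) * (C 2) + (B₁) * (B₃)^2 * (C 1)^2 + (B₁) * (B₂)^2 * (C 2)^2 + (B₁) * (B₂)^2 * (B₃)^2) * e1 + (-(B₂) * (B₃) * (C 0) * (C 2)^2 - (B₂) * (B₃)^3 * (C 0)) * e2 + (-(B₁) * (B₂) * (B₃) * (C 0) * (C 2) + (B₁)^2 * (B₃)^2 * (C 1)) * e3 + (-(B₂)^2 * (B₃)^2 * (C 0) - (B₁) * (B₂) * (B₃) * (C 1) * (C 2)) * e4 + (-(B₁) * (B₂) * (B₃) * (C 2)^2 - (B₁) * (B₂) * (B₃)^3) * e5 + ((B₁) * (B₂) * (C 0) * (C 2)^2 - (B₁)^2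 * (B₃) * (C 1) * (C 2)) * e6 + ((B₂)^2 * (B₃) * (C 0) * (C 2) + (B₁) * (B₂) * (C 1) * (C 2)^2) * e7 + ((B₁) * (B₂) * (C 2)^3 + (B₁) * (B₂) * (B₃)^2 * (C 2)) * e8 + (-(B₂) * (B₃)^2 * (C 0)^2 - (B₁) * (B₃) * (C 0) * (C 1) * (C 2) - (B₁)^2 * (B₂) * (C 2)^2 - (B₁)^2 * (B₂) * (B₃)^2) * e9 + (-(B₂) * (B₃)^2 * (C 0) * (C 1) - (B₁) * (B₃) * (C 1)^2 * (C 2)) * e10 + (-(B₁) * (B₃) * (C 1) * (C 2)^2 - (B₁) * (B₃)^3 * (C 1)) * e11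
  have g5 : a2 2 = b2 2 := by
    have := mul_eq_zero.mp k5
    rcases this with h' | h'
    · linarith
    · linarith
  have k6 : (4:ℝ) * ((B₁*B₂*B₃)^2 + (B₂*B₃*C 0)^2 + (B₁*B₃*C 1)^2 + (B₁*B₂*C 2)^2) * (a3 0 - b3 0) = 0 := by
    linear_combination (-(B₁) * (B₃) * (C 0)^2 * (C 1) - (B₁)^3 * (B₃) * (C 1)) * e0 + (-(B₁) * (B₃) * (C 0) * (C 1)^2 + (B₁)^2 * (B₂) * (C 1) * (C 2)) * e1 + ((B₂) * (B₃)^2 * (C 0)^2 - (B₁) * (B₃) * (C 0) * (C 1) * (C 2) + (B₁)^2 * (B₂) * (C 2)^2 + (B₁)^2 * (B₂) * (B₃)^2) * e2 + (-(B₁) * (B₂) * (C 0)^2 * (C 2) - (B₁)^3 * (B₂) * (C 2)) * e3 + (-(B₂)^2 * (B₃) * (C 0)^2 - (B₁) * (B₂) * (C 0) * (C 1) * (C 2) - (B₁)^2 * (B₃) * (C 1)^2 - (B₁)^2 * (B₂)^2 * (B₃)) * e4 + (-(B₁) * (B₂) * (C 0) * (C 2)^2 - (B₁)^2 * (B₃)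 * (C 1) * (C 2)) * e5 + (-(B₁) * (B₂) * (B₃) * (C 0)^2 - (B₁)^3 * (B₂) * (B₃)) * e6 + (-(B₁) * (B₂) * (B₃) * (C 0) * (C 1) + (B₁)^2 * (B₂)^2 * (C 2)) * e7 + (-(B₁) * (B₂) * (B₃) * (C 0) * (C 2) - (B₁)^2 * (B₃)^2 * (C 1)) * e8 + ((B₂) * (B₃) * (C 0)^3 + (B₁)^2 * (B₂) * (B₃) * (C 0)) * e9 + ((B₂) * (B₃) * (C 0)^2 * (C 1) - (B₁) * (B₂)^2 * (C 0) * (C 2)) * e10 + ((B₂) * (B₃) * (C 0)^2 * (C 2) + (B₁) * (B₃)^2 * (C 0) * (C 1)) * e11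
  have g6 : a3 0 = b3 0 := by
    have := mul_eq_zero.mp k6
    rcases this with h' | h'
    · linarith
    · linarith
  have k7 : (4:ℝ) * ((B₁*B₂*B₃)^2 + (B₂*B₃*C 0)^2 + (B₁*B₃*C 1)^2 + (B₁*B₂*C 2)^2) * (a3 1 - b3 1) = 0 := by
    linear_combination (-(B₁) * (B₃) * (C 0) * (C 1)^2 - (B₁)^2 * (B₂) * (C 1) * (C 2)) * e0 + (-(B₁) * (B₃) * (C 1)^3 - (B₁) * (B₂)^2 * (B₃) * (C 1)) * e1 + ((B₂) * (B₃)^2 * (C 0) * (C 1) - (B₁) * (B₃) * (C 1)^2 * (C 2)) * e2 + ((B₂)^2 * (B₃) * (C 0)^2 - (B₁) * (B₂) * (C 0) * (C 1) * (C 2) + (B₁)^2 * (B₃) * (C 1)^2 + (B₁)^2 * (B₂)^2 * (B₃)) * e3 + (-(B₁) * (B₂) * (C 1)^2 * (C 2) - (B₁) * (B₂)^3 * (C 2)) * e4 + ((B₂)^2 * (B₃) * (C 0) * (C 2) - (B₁) * (B₂) * (C 1) * (C 2)^2) * e5 + (-(B₁) * (B₂) * (B₃) * (C 0) * (C 1)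 - (B₁)^2 * (B₂)^2 * (C 2)) * e6 + (-(B₁) * (B₂) * (B₃) * (C 1)^2 - (B₁) * (B₂)^3 * (B₃)) * e7 + ((B₂)^2 * (B₃)^2 * (C 0) - (B₁) * (B₂) * (B₃) * (C 1) * (C 2)) * e8 + ((B₂) * (B₃) * (C 0)^2 * (C 1) + (B₁) * (B₂)^2 * (C 0) * (C 2)) * e9 + ((B₂) * (B₃) * (C 0) * (C 1)^2 + (B₂)^3 * (B₃) * (C 0)) * e10 + ((B₂) * (B₃) * (C 0) * (C 1) * (C 2) + (B₁) * (B₃)^2 * (C 1)^2 + (B₁) * (B₂)^2 * (C 2)^2 + (B₁) * (B₂)^2 * (B₃)^2) * e11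
  have g7 : a3 1 = b3 1 := by
    have := mul_eq_zero.mp k7
    rcases this with h' | h'
    · linarith
    · linarith
  have k8 : (4:ℝ) * ((B₁*B₂*B₃)^2 + (B₂*B₃*C 0)^2 + (B₁*B₃*C 1)^2 + (B₁*B₂*C 2)^2) * (a3 2 - b3 2) = 0 := by
    linear_combination (-(B₂) * (B₃)^2 * (C 0)^2 - (B₁) * (B₃) * (C 0) * (C 1) * (C 2) - (B₁)^2 * (B₂) * (C 2)^2 - (B₁)^2 * (B₂) * (B₃)^2) * e0 + (-(B₂) * (B₃)^2 * (C 0) * (C 1) - (B₁) * (B₃) * (C 1)^2 * (C 2)) * e1 + (-(B₁) * (B₃) * (C 1) * (C 2)^2 - (B₁) * (B₃)^3 * (C 1)) * e2 + (-(B₁) * (B₂) * (C 0) * (C 2)^2 + (B₁)^2 * (B₃) * (C 1) * (C 2)) * e3 + (-(B₂)^2 * (B₃) * (C 0) * (C 2) - (B₁) * (B₂) * (C 1) * (C 2)^2) * e4 + (-(B₁) * (B₂) * (C 2)^3 - (B₁) * (B₂) * (B₃)^2 * (C 2)) * e5 + (-(B₁) * (B₂) * (B₃) * (C 0) * (C 2)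 + (B₁)^2 * (B₃)^2 * (C 1)) * e6 + (-(B₂)^2 * (B₃)^2 * (C 0) - (B₁) * (B₂) * (B₃) * (C 1) * (C 2)) * e7 + (-(B₁) * (B₂) * (B₃) * (C 2)^2 - (B₁) * (B₂) * (B₃)^3) * e8 + ((B₂) * (B₃) * (C 0)^2 * (C 2) - (B₁) * (B₃)^2 * (C 0) * (C 1)) * e9 + ((B₂) * (B₃) * (C 0) * (C 1) * (C 2) - (B₁) * (B₃)^2 * (C 1)^2 - (B₁) * (B₂)^2 * (C 2)^2 - (B₁) * (B₂)^2 * (B₃)^2) * e10 + ((B₂) * (B₃) * (C 0) * (C 2)^2 + (B₂) * (B₃)^3 * (C 0)) * e11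
  have g8 : a3 2 = b3 2 := by
    have := mul_eq_zero.mp k8
    rcases this with h' | h'
    · linarith
    · linarith
  have k9 : (4:ℝ) * ((B₁*B₂*B₃)^2 + (B₂*B₃*C 0)^2 + (B₁*B₃*C 1)^2 + (B₁*B₂*C 2)^2) * (a4 0 - b4 0) = 0 := by
    linear_combination (-(B₁) * (B₂) * (C 0)^2 * (C 2) - (B₁)^3 * (B₂) * (C 2)) * e0 + (-(B₂)^2 * (B₃) * (C 0)^2 - (B₁) * (B₂) * (C 0) * (C 1) * (C 2) - (B₁)^2 * (B₃) * (C 1)^2 - (B₁)^2 * (B₂)^2 * (B₃)) * e1 + (-(B₁) * (B₂) * (C 0) * (C 2)^2 - (B₁)^2 * (B₃) * (C 1) * (C 2)) * e2 + ((B₁) * (B₃) * (C 0)^2 * (C 1) + (B₁)^3 * (B₃) * (C 1)) * e3 + ((B₁) * (B₃) * (C 0) * (C 1)^2 - (B₁)^2 * (B₂) * (C 1) * (C 2)) * e4 + (-(B₂) * (B₃)^2 * (C 0)^2 + (B₁) * (B₃) * (C 0) * (C 1) * (C 2) - (B₁)^2 * (B₂) * (C 2)^2 - (B₁)^2 * (B₂)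 * (B₃)^2) * e5 + (-(B₂) * (B₃) * (C 0)^3 - (B₁)^2 * (B₂) * (B₃) * (C 0)) * e6 + (-(B₂) * (B₃) * (C 0)^2 * (C 1) + (B₁) * (B₂)^2 * (C 0) * (C 2)) * e7 + (-(B₂) * (B₃) * (C 0)^2 * (C 2) - (B₁) * (B₃)^2 * (C 0) * (C 1)) * e8 + (-(B₁) * (B₂) * (B₃) * (C 0)^2 - (B₁)^3 * (B₂) * (B₃)) * e9 + (-(B₁) * (B₂) * (B₃) * (C 0) * (C 1) + (B₁)^2 * (B₂)^2 * (C 2)) * e10 + (-(B₁) * (B₂) * (B₃) * (C 0) * (C 2) - (B₁)^2 * (B₃)^2 * (C 1)) * e11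
  have g9 : a4 0 = b4 0 := by
    have := mul_eq_zero.mp k9
    rcases this with h' | h'
    · linarith
    · linarith
  have k10 : (4:ℝ) * ((B₁*B₂*B₃)^2 + (B₂*B₃*C 0)^2 + (B₁*B₃*C 1)^2 + (B₁*B₂*C 2)^2) * (a4 1 - b4 1) = 0 := by
    linear_combination ((B₂)^2 * (B₃) * (C 0)^2 - (B₁) * (B₂) * (C 0) * (C 1) * (C 2) + (B₁)^2 * (B₃) * (C 1)^2 + (B₁)^2 * (B₂)^2 * (B₃)) * e0 + (-(B₁) * (B₂) * (C 1)^2 * (C 2) - (B₁) * (B₂)^3 * (C 2)) * e1 + ((B₂)^2 * (B₃) * (C 0) * (C 2) - (B₁) * (B₂) * (C 1) * (C 2)^2) * e2 + ((B₁) * (B₃) * (C 0) * (C 1)^2 + (B₁)^2 * (B₂) * (C 1) * (C 2)) * e3 + ((B₁) * (B₃) * (C 1)^3 + (B₁) * (B₂)^2 * (B₃) * (C 1)) * e4 + (-(B₂) * (B₃)^2 * (C 0) * (C 1) + (B₁) * (B₃) * (C 1)^2 * (C 2)) * e5 + (-(B₂) * (B₃) * (C 0)^2 * (C 1) - (B₁)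 * (B₂)^2 * (C 0) * (C 2)) * e6 + (-(B₂) * (B₃) * (C 0) * (C 1)^2 - (B₂)^3 * (B₃) * (C 0)) * e7 + (-(B₂) * (B₃) * (C 0) * (C 1) * (C 2) - (B₁) * (B₃)^2 * (C 1)^2 - (B₁) * (B₂)^2 * (C 2)^2 - (B₁) * (B₂)^2 * (B₃)^2) * e8 + (-(B₁) * (B₂) * (B₃) * (C 0) * (C 1) - (B₁)^2 * (B₂)^2 * (C 2)) * e9 + (-(B₁) * (B₂) * (B₃) * (C 1)^2 - (B₁) * (B₂)^3 * (B₃)) * e10 + ((B₂)^2 * (B₃)^2 * (C 0) - (B₁) * (B₂) * (B₃) * (C 1) * (C 2)) * e11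
  have g10 : a4 1 = b4 1 := by
    have := mul_eq_zero.mp k10
    rcases this with h' | h'
    · linarith
    · linarith
  have k11 : (4:ℝ) * ((B₁*B₂*B₃)^2 + (B₂*B₃*C 0)^2 + (B₁*B₃*C 1)^2 + (B₁*B₂*C 2)^2) * (a4 2 - b4 2) = 0 := by
    linear_combination (-(B₁) * (B₂) * (C 0) * (C 2)^2 + (B₁)^2 * (B₃) * (C 1) * (C 2)) * e0 + (-(B₂)^2 * (B₃) * (C 0) * (C 2) - (B₁) * (B₂) * (C 1) * (C 2)^2) * e1 + (-(B₁) * (B₂) * (C 2)^3 - (B₁) * (B₂) * (B₃)^2 * (C 2)) * e2 + ((B₂) * (B₃)^2 * (C 0)^2 + (B₁) * (B₃) * (C 0) * (C 1) * (C 2) + (B₁)^2 * (B₂) * (C 2)^2 + (B₁)^2 * (B₂) * (B₃)^2) * e3 + ((B₂) * (B₃)^2 * (C 0) * (C 1) + (B₁) * (B₃) * (C 1)^2 * (C 2)) * e4 + ((B₁) * (B₃) * (C 1) * (C 2)^2 + (B₁) * (B₃)^3 * (C 1)) * e5 + (-(B₂) * (B₃) * (C 0)^2 * (C 2) + (B₁)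 * (B₃)^2 * (C 0) * (C 1)) * e6 + (-(B₂) * (B₃) * (C 0) * (C 1) * (C 2) + (B₁) * (B₃)^2 * (C 1)^2 + (B₁) * (B₂)^2 * (C 2)^2 + (B₁) * (B₂)^2 * (B₃)^2) * e7 + (-(B₂) * (B₃) * (C 0) * (C 2)^2 - (B₂) * (B₃)^3 * (C 0)) * e8 + (-(B₁) * (B₂) * (B₃) * (C 0) * (C 2) + (B₁)^2 * (B₃)^2 * (C 1)) * e9 + (-(B₂)^2 * (B₃)^2 * (C 0) - (B₁) * (B₂) * (B₃) * (C 1) * (C 2)) * e10 + (-(B₁) * (B₂) * (B₃) * (C 2)^2 - (B₁) * (B₂) * (B₃)^3) * e11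
  have g11 : a4 2 = b4 2 := by
    have := mul_eq_zero.mp k11
    rcases this with h' | h'
    · linarith
    · linarith
  refine Prod.ext ?_ (Prod.ext ?_ (Prod.ext ?_ ?_)) <;> funext k <;> fin_cases k <;>
    simp [g0, g1, g2, g3, g4, g5, g6, g7, g8, g9, g10, g11]
end

section
/- Let η₁ = [[i,0],[0,−i]], η₂ = [[0,1],[−1,0]], η₃ = [[0,i],[i,0]] be the 2×2 complex matrices (a basis of su(2) satisfying [η_i,η_j] = 2ε_{ijk}η_k, where [X,Y] = XY − YX). Let B₁, B₂, B₃ ∈ ℝ with B₁B₂B₃ ≠ 0, and let C be a real linear combination of η₁, η₂, η₃. Define the linear map L on quadruples (φ¹,φ²,φ³,φ⁴) of matrices in the real span of {η₁,η₂,η₃} by L(φ¹,φ²,φ³,φ⁴) = ( −B₁[η₁,φ²] − B₂[η₂,φ³] − B₃[η₃,φ⁴] + [C,φ¹] , B₁[η₁,φ¹] + B₂[η₂,φ⁴] − B₃[η₃,φ³] + [C,φ²] , −B₁[η₁,φ⁴] + B₂[η₂,φ¹] + B₃[η₃,φ²] + [C,φ³] , B₁[η₁,φ³] − B₂[η₂,φ²]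 + B₃[η₃,φ¹] + [C,φ⁴] ). If L(φ¹,φ²,φ³,φ⁴) = (0,0,0,0) then φ¹ = φ² = φ³ = φ⁴ = 0. -/
set_option maxHeartbeats 4000000 in
/-- Lemma 3 (Lemma BC) expressed with 2×2 complex matrices: with
`η₁ = [[i,0],[0,-i]]`, `η₂ = [[0,1],[-1,0]]`, `η₃ = [[0,i],[i,0]]`,
`B₁ B₂ B₃ : ℝ` with `B₁B₂B₃ ≠ 0`, `C` a real linear combination of the `ηᵢ`,
and `φ₁,…,φ₄` in the real span of `{η₁,η₂,η₃}`, if all four components of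
`L(φ₁,φ₂,φ₃,φ₄)` vanish then `φ₁ = φ₂ = φ₃ = φ₄ = 0`. -/
theorem perturbed_VW_lemma_BC_matrices
    (η₁ η₂ η₃ : Matrix (Fin 2) (Fin 2) ℂ)
    (hη₁ : η₁ = !![Complex.I, 0; 0, -Complex.I])
    (hη₂ : η₂ = !![0, 1; -1, 0])
    (hη₃ : η₃ = !![0, Complex.I; Complex.I, 0])
    (B₁ B₂ B₃ : ℝ) (hB : B₁ * B₂ * B₃ ≠ 0)
    (C : Matrix (Fin 2) (Fin 2) ℂ)
    (hC : ∃ c₁ c₂ c₃ : ℝ, C = c₁ • η₁ + c₂ • η₂ + c₃ • η₃)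
    (φ₁ φ₂ φ₃ φ₄ : Matrix (Fin 2) (Fin 2) ℂ)
    (hφ₁ : φ₁ ∈ Submodule.span ℝ ({η₁, η₂, η₃} : Set (Matrix (Fin 2) (Fin 2) ℂ)))
    (hφ₂ : φ₂ ∈ Submodule.span ℝ ({η₁, η₂, η₃} : Set (Matrix (Fin 2) (Fin 2) ℂ)))
    (hφ₃ : φ₃ ∈ Submodule.span ℝ ({η₁, η₂, η₃} : Set (Matrix (Fin 2) (Fin 2) ℂ)))
    (hφ₄ : φ₄ ∈ Submodule.span ℝ ({η₁, η₂, η₃} : Set (Matrix (Fin 2) (Fin 2) ℂ)))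
    (h1 : -(B₁ • ⁅η₁, φ₂⁆) - B₂ • ⁅η₂, φ₃⁆ - B₃ • ⁅η₃, φ₄⁆ + ⁅C, φ₁⁆ = 0)
    (h2 : B₁ • ⁅η₁, φ₁⁆ + B₂ • ⁅η₂, φ₄⁆ - B₃ • ⁅η₃, φ₃⁆ + ⁅C, φ₂⁆ = 0)
    (h3 : -(B₁ • ⁅η₁, φ₄⁆) + B₂ • ⁅η₂, φ₁⁆ + B₃ • ⁅η₃, φ₂⁆ + ⁅C, φ₃⁆ = 0)
    (h4 : B₁ • ⁅η₁, φ₃⁆ - B₂ • ⁅η₂, φ₂⁆ + B₃ • ⁅η₃, φ₁⁆ + ⁅C, φ₄⁆ = 0) :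
    φ₁ = 0 ∧ φ₂ = 0 ∧ φ₃ = 0 ∧ φ₄ = 0 := by
  obtain ⟨c1, c2, c3, hCe⟩ := hC
  subst hη₁; subst hη₂; subst hη₃
  have span3 : ∀ x : Matrix (Fin 2) (Fin 2) ℂ, x ∈ Submodule.span ℝ ({!![Complex.I, 0; 0, -Complex.I], !![0, 1; -1, 0], !![0, Complex.I; Complex.I, 0]} : Set (Matrix (Fin 2) (Fin 2) ℂ)) → ∃ r s t : ℝ, x = r • !![Complex.I, 0; 0, -Complex.I] + s • !![0, 1; -1, 0] + t • !![0, Complex.I; Complex.I, 0] := by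
    intro x hx
    rw [Submodule.mem_span_insert] at hx
    obtain ⟨r, z, hz, rfl⟩ := hx
    rw [Submodule.mem_span_insert] at hz
    obtain ⟨s, w, hw, rfl⟩ := hz
    rw [Submodule.mem_span_singleton] at hw
    obtain ⟨t, rfl⟩ := hw
    exact ⟨r, s, t, by module⟩
  obtain ⟨a1, b1, g1, hp1⟩ := span3 φ₁ hφ₁
  obtain ⟨a2, b2, g2, hp2⟩ := span3 φ₂ hφ₂
  obtain ⟨a3, b3, g3, hp3⟩ := span3 φ₃ hφ₃
  obtain ⟨a4, b4, g4, hp4⟩ := span3 φ₄ hφ₄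
  have key : ∀ p q r u v w : ℝ, ⁅(p • !![Complex.I, 0; 0, -Complex.I] + q • !![0, 1; -1, 0] + r • !![0, Complex.I; Complex.I, 0] : Matrix (Fin 2) (Fin 2) ℂ), (u • !![Complex.I, 0; 0, -Complex.I] + v • !![0, 1; -1, 0] + w • !![0, Complex.I; Complex.I, 0])⁆ = (2*(q*w - r*v)) • !![Complex.I, 0; 0, -Complex.I] + (2*(r*u - p*w)) • !![0, 1; -1, 0] + (2*(p*v - q*u)) • !![0, Complex.I; Complex.I, 0] := by
    intro p q r u v w
    ext i j
    fin_cases i <;> fin_cases j <;>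
      simp [Ring.lie_def, Matrix.mul_apply, Fin.sum_univ_two, Complex.ext_iff] <;> (first | (constructor <;> ring) | ring)
  have key1 : ∀ u v w : ℝ, ⁅(!![Complex.I, 0; 0, -Complex.I] : Matrix (Fin 2) (Fin 2) ℂ), (u • !![Complex.I, 0; 0, -Complex.I] + v • !![0, 1; -1, 0] + w • !![0, Complex.I; Complex.I, 0])⁆ = (-2*w) • !![0, 1; -1, 0] + (2*v) • !![0, Complex.I; Complex.I, 0] := by
    intro u v w
    ext i j
    fin_cases i <;> fin_cases j <;>
      simp [Ring.lie_def, Matrix.mul_apply, Fin.sum_univ_two, Complex.ext_iff] <;> (first | (constructor <;> ring) | ring)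
  have key2 : ∀ u v w : ℝ, ⁅(!![0, 1; -1, 0] : Matrix (Fin 2) (Fin 2) ℂ), (u • !![Complex.I, 0; 0, -Complex.I] + v • !![0, 1; -1, 0] + w • !![0, Complex.I; Complex.I, 0])⁆ = (2*w) • !![Complex.I, 0; 0, -Complex.I] + (-2*u) • !![0, Complex.I; Complex.I, 0] := by
    intro u v w
    ext i j
    fin_cases i <;> fin_cases j <;>
      simp [Ring.lie_def, Matrix.mul_apply, Fin.sum_univ_two, Complex.ext_iff] <;> (first | (constructor <;> ring) | ring)
  have key3 : ∀ u v w : ℝ, ⁅(!![0, Complex.I; Complex.I, 0] : Matrix (Fin 2) (Fin 2) ℂ), (u • !![Complex.I, 0; 0, -Complex.I] + v • !![0, 1; -1, 0] + w • !![0, Complex.I; Complex.I, 0])⁆ = (-2*v) • !![Complex.I, 0; 0, -Complex.I] + (2*u) • !![0, 1; -1, 0] := by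
    intro u v w
    ext i j
    fin_cases i <;> fin_cases j <;>
      simp [Ring.lie_def, Matrix.mul_apply, Fin.sum_univ_two, Complex.ext_iff] <;> (first | (constructor <;> ring) | ring)
  have indep : ∀ r s t : ℝ, r • !![Complex.I, 0; 0, -Complex.I] + s • !![0, 1; -1, 0] + t • !![0, Complex.I; Complex.I, 0] = (0 : Matrix (Fin 2) (Fin 2) ℂ) → r = 0 ∧ s = 0 ∧ t = 0 := by
    intro r s t h
    have h00 := congrFun (congrFun h 0) 0
    have h01 := congrFun (congrFun h 0) 1
    simp [Complex.ext_iff] at h00 h01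
    exact ⟨h00, h01.1, h01.2⟩
  have H1 : (((-2/1 : ℝ))*c3*b1 + ((2/1 : ℝ))*c2*g1 + ((-2/1 : ℝ))*B₂*g3 + ((2/1 : ℝ))*B₃*b4) • !![Complex.I, 0; 0, -Complex.I] + (((2/1 : ℝ))*c3*a1 + ((-2/1 : ℝ))*c1*g1 + ((2/1 : ℝ))*B₁*g2 + ((-2/1 : ℝ))*B₃*a4) • !![0, 1; -1, 0] + (((-2/1 : ℝ))*c2*a1 + ((2/1 : ℝ))*c1*b1 + ((-2/1 : ℝ))*B₁*b2 + ((2/1 : ℝ))*B₂*a3) • !![0, Complex.I; Complex.I, 0] = (0 : Matrix (Fin 2) (Fin 2) ℂ) := by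
    have hh := h1
    rw [hCe, hp1, hp2, hp3, hp4] at hh
    simp only [key, key1, key2, key3] at hh
    rw [← hh]; module
  obtain ⟨e1, e2, e3⟩ := indep _ _ _ H1
  have H2 : (((-2/1 : ℝ))*c3*b2 + ((2/1 : ℝ))*c2*g2 + ((2/1 : ℝ))*B₃*b3 + ((2/1 : ℝ))*B₂*g4) • !![Complex.I, 0; 0, -Complex.I] + (((-2/1 : ℝ))*B₁*g1 + ((2/1 : ℝ))*c3*a2 + ((-2/1 : ℝ))*c1*g2 + ((-2/1 : ℝ))*B₃*a3) • !![0, 1; -1, 0] + (((2/1 : ℝ))*B₁*b1 + ((-2/1 : ℝ))*c2*a2 + ((2/1 : ℝ))*c1*b2 + ((-2/1 : ℝ))*B₂*a4) • !![0, Complex.I; Complex.I, 0] = (0 : Matrix (Fin 2) (Fin 2) ℂ) := by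
    have hh := h2
    rw [hCe, hp1, hp2, hp3, hp4] at hh
    simp only [key, key1, key2, key3] at hh
    rw [← hh]; module
  obtain ⟨e4, e5, e6⟩ := indep _ _ _ H2
  have H3 : (((2/1 : ℝ))*B₂*g1 + ((-2/1 : ℝ))*B₃*b2 + ((-2/1 : ℝ))*c3*b3 + ((2/1 : ℝ))*c2*g3) • !![Complex.I, 0; 0, -Complex.I] + (((2/1 : ℝ))*B₃*a2 + ((2/1 : ℝ))*c3*a3 + ((-2/1 : ℝ))*c1*g3 + ((2/1 : ℝ))*B₁*g4) • !![0, 1; -1, 0] + (((-2/1 : ℝ))*B₂*a1 + ((-2/1 : ℝ))*c2*a3 + ((2/1 : ℝ))*c1*b3 + ((-2/1 : ℝ))*B₁*b4) • !![0, Complex.I; Complex.I, 0] = (0 : Matrix (Fin 2) (Fin 2) ℂ) := by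
    have hh := h3
    rw [hCe, hp1, hp2, hp3, hp4] at hh
    simp only [key, key1, key2, key3] at hh
    rw [← hh]; module
  obtain ⟨e7, e8, e9⟩ := indep _ _ _ H3
  have H4 : (((-2/1 : ℝ))*B₃*b1 + ((-2/1 : ℝ))*B₂*g2 + ((-2/1 : ℝ))*c3*b4 + ((2/1 : ℝ))*c2*g4) • !![Complex.I, 0; 0, -Complex.I] + (((2/1 : ℝ))*B₃*a1 + ((-2/1 : ℝ))*B₁*g3 + ((2/1 : ℝ))*c3*a4 + ((-2/1 : ℝ))*c1*g4) • !![0, 1; -1, 0] + (((2/1 : ℝ))*B₂*a2 + ((2/1 : ℝ))*B₁*b3 + ((-2/1 : ℝ))*c2*a4 + ((2/1 : ℝ))*c1*b4) • !![0, Complex.I; Complex.I, 0] = (0 : Matrix (Fin 2) (Fin 2) ℂ) := by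
    have hh := h4
    rw [hCe, hp1, hp2, hp3, hp4] at hh
    simp only [key, key1, key2, key3] at hh
    rw [← hh]; module
  obtain ⟨e10, e11, e12⟩ := indep _ _ _ H4
  have hPpos : (0:ℝ) < ((B₁*B₂*B₃)^2 + (c1*B₂*B₃)^2 + (c2*B₁*B₃)^2 + (c3*B₁*B₂)^2) := by positivity
  have hP := hPpos.ne'
  have z1 : a1 = 0 := by
    have hz : ((B₁*B₂*B₃)^2 + (c1*B₂*B₃)^2 + (c2*B₁*B₃)^2 + (c3*B₁*B₂)^2) * a1 = 0 := by
      linear_combination (((-1/4 : ℝ))*B₁*B₂*B₃*c1*c1 + ((-1/4 : ℝ))*B₁*B₁*B₁*B₂*B₃) * e1 + (((-1/4 : ℝ))*B₁*B₂*B₃*c1*c2 + ((1/4 : ℝ))*B₁*B₁*B₂*B₂*c3) * e2 + (((-1/4 : ℝ))*B₁*B₂*B₃*c1*c3 + ((-1/4 : ℝ))*B₁*B₁*B₃*B₃*c2) * e3 + (((1/4 : ℝ))*B₂*B₃*c1*c1*c1 + ((1/4 : ℝ))*B₁*B₁*B₂*B₃*c1) * e4 + (((1/4 : ℝ))*B₂*B₃*c1*c1*c2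 + ((-1/4 : ℝ))*B₁*B₂*B₂*c1*c3) * e5 + (((1/4 : ℝ))*B₂*B₃*c1*c1*c3 + ((1/4 : ℝ))*B₁*B₃*B₃*c1*c2) * e6 + (((1/4 : ℝ))*B₁*B₃*c1*c1*c2 + ((1/4 : ℝ))*B₁*B₁*B₁*B₃*c2) * e7 + (((1/4 : ℝ))*B₁*B₃*c1*c2*c2 + ((-1/4 : ℝ))*B₁*B₁*B₂*c2*c3) * e8 + (((-1/4 : ℝ))*B₂*B₃*B₃*c1*c1 + ((1/4 : ℝ))*B₁*B₃*c1*c2*c3 + ((-1/4 : ℝ))*B₁*B₁*B₂*c3*c3 + ((-1/4 : ℝ))*B₁*B₁*B₂*B₃*B₃) * e9 + (((1/4 : ℝ))*B₁*B₂*c1*c1*c3 + ((1/4 : ℝ))*B₁*B₁*B₁*B₂*c3) * e10 + (((1/4 : ℝ))*B₂*B₂*B₃*c1*c1 + ((1/4 : ℝ))*B₁*B₂*c1*c2*c3 + ((1/4 : ℝ))*B₁*B₁*B₃*c2*c2 + ((1/4 : ℝ))*B₁*B₁*B₂*B₂*B₃) * e11 + (((1/4 : ℝ))*B₁*B₂*c1*c3*c3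 + ((1/4 : ℝ))*B₁*B₁*B₃*c2*c3) * e12
    exact (mul_eq_zero.mp hz).resolve_left hP
  have z2 : b1 = 0 := by
    have hz : ((B₁*B₂*B₃)^2 + (c1*B₂*B₃)^2 + (c2*B₁*B₃)^2 + (c3*B₁*B₂)^2) * b1 = 0 := by
      linear_combination (((-1/4 : ℝ))*B₁*B₂*B₃*c1*c2 + ((-1/4 : ℝ))*B₁*B₁*B₂*B₂*c3) * e1 + (((-1/4 : ℝ))*B₁*B₂*B₃*c2*c2 + ((-1/4 : ℝ))*B₁*B₂*B₂*B₂*B₃) * e2 + (((1/4 : ℝ))*B₂*B₂*B₃*B₃*c1 + ((-1/4 : ℝ))*B₁*B₂*B₃*c2*c3) * e3 + (((1/4 : ℝ))*B₂*B₃*c1*c1*c2 + ((1/4 : ℝ))*B₁*B₂*B₂*c1*c3) * e4 + (((1/4 : ℝ))*B₂*B₃*c1*c2*c2 + ((1/4 : ℝ))*B₂*B₂*B₂*B₃*c1) * e5 + (((1/4 : ℝ))*B₂*B₃*c1*c2*c3 + ((1/4 : ℝ))*B₁*B₃*B₃*c2*c2 + ((1/4 : ℝ))*B₁*B₂*B₂*c3*c3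 + ((1/4 : ℝ))*B₁*B₂*B₂*B₃*B₃) * e6 + (((1/4 : ℝ))*B₁*B₃*c1*c2*c2 + ((1/4 : ℝ))*B₁*B₁*B₂*c2*c3) * e7 + (((1/4 : ℝ))*B₁*B₃*c2*c2*c2 + ((1/4 : ℝ))*B₁*B₂*B₂*B₃*c2) * e8 + (((-1/4 : ℝ))*B₂*B₃*B₃*c1*c2 + ((1/4 : ℝ))*B₁*B₃*c2*c2*c3) * e9 + (((-1/4 : ℝ))*B₂*B₂*B₃*c1*c1 + ((1/4 : ℝ))*B₁*B₂*c1*c2*c3 + ((-1/4 : ℝ))*B₁*B₁*B₃*c2*c2 + ((-1/4 : ℝ))*B₁*B₁*B₂*B₂*B₃) * e10 + (((1/4 : ℝ))*B₁*B₂*c2*c2*c3 + ((1/4 : ℝ))*B₁*B₂*B₂*B₂*c3) * e11 + (((-1/4 : ℝ))*B₂*B₂*B₃*c1*c3 + ((1/4 : ℝ))*B₁*B₂*c2*c3*c3) * e12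
    exact (mul_eq_zero.mp hz).resolve_left hP
  have z3 : g1 = 0 := by
    have hz : ((B₁*B₂*B₃)^2 + (c1*B₂*B₃)^2 + (c2*B₁*B₃)^2 + (c3*B₁*B₂)^2) * g1 = 0 := by
      linear_combination (((-1/4 : ℝ))*B₁*B₂*B₃*c1*c3 + ((1/4 : ℝ))*B₁*B₁*B₃*B₃*c2) * e1 + (((-1/4 : ℝ))*B₂*B₂*B₃*B₃*c1 + ((-1/4 : ℝ))*B₁*B₂*B₃*c2*c3) * e2 + (((-1/4 : ℝ))*B₁*B₂*B₃*c3*c3 + ((-1/4 : ℝ))*B₁*B₂*B₃*B₃*B₃) * e3 + (((1/4 : ℝ))*B₂*B₃*c1*c1*c3 + ((-1/4 : ℝ))*B₁*B₃*B₃*c1*c2) * e4 + (((1/4 : ℝ))*B₂*B₃*c1*c2*c3 + ((-1/4 : ℝ))*B₁*B₃*B₃*c2*c2 + ((-1/4 : ℝ))*B₁*B₂*B₂*c3*c3 + ((-1/4 : ℝ))*B₁*B₂*B₂*B₃*B₃) * e5 + (((1/4 : ℝ))*B₂*B₃*c1*c3*c3 + ((1/4 : ℝ))*B₂*B₃*B₃*B₃*c1)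 * e6 + (((1/4 : ℝ))*B₂*B₃*B₃*c1*c1 + ((1/4 : ℝ))*B₁*B₃*c1*c2*c3 + ((1/4 : ℝ))*B₁*B₁*B₂*c3*c3 + ((1/4 : ℝ))*B₁*B₁*B₂*B₃*B₃) * e7 + (((1/4 : ℝ))*B₂*B₃*B₃*c1*c2 + ((1/4 : ℝ))*B₁*B₃*c2*c2*c3) * e8 + (((1/4 : ℝ))*B₁*B₃*c2*c3*c3 + ((1/4 : ℝ))*B₁*B₃*B₃*B₃*c2) * e9 + (((1/4 : ℝ))*B₁*B₂*c1*c3*c3 + ((-1/4 : ℝ))*B₁*B₁*B₃*c2*c3) * e10 + (((1/4 : ℝ))*B₂*B₂*B₃*c1*c3 + ((1/4 : ℝ))*B₁*B₂*c2*c3*c3) * e11 + (((1/4 : ℝ))*B₁*B₂*c3*c3*c3 + ((1/4 : ℝ))*B₁*B₂*B₃*B₃*c3) * e12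
    exact (mul_eq_zero.mp hz).resolve_left hP
  have z4 : a2 = 0 := by
    have hz : ((B₁*B₂*B₃)^2 + (c1*B₂*B₃)^2 + (c2*B₁*B₃)^2 + (c3*B₁*B₂)^2) * a2 = 0 := by
      linear_combination (((-1/4 : ℝ))*B₂*B₃*c1*c1*c1 + ((-1/4 : ℝ))*B₁*B₁*B₂*B₃*c1) * e1 + (((-1/4 : ℝ))*B₂*B₃*c1*c1*c2 + ((1/4 : ℝ))*B₁*B₂*B₂*c1*c3) * e2 + (((-1/4 : ℝ))*B₂*B₃*c1*c1*c3 + ((-1/4 : ℝ))*B₁*B₃*B₃*c1*c2) * e3 + (((-1/4 : ℝ))*B₁*B₂*B₃*c1*c1 + ((-1/4 : ℝ))*B₁*B₁*B₁*B₂*B₃) * e4 + (((-1/4 : ℝ))*B₁*B₂*B₃*c1*c2 + ((1/4 : ℝ))*B₁*B₁*B₂*B₂*c3) * e5 + (((-1/4 : ℝ))*B₁*B₂*B₃*c1*c3 + ((-1/4 : ℝ))*B₁*B₁*B₃*B₃*c2) * e6 + (((1/4 : ℝ))*B₁*B₂*c1*c1*c3 + ((1/4 : ℝ))*B₁*B₁*B₁*B₂*c3)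 * e7 + (((1/4 : ℝ))*B₂*B₂*B₃*c1*c1 + ((1/4 : ℝ))*B₁*B₂*c1*c2*c3 + ((1/4 : ℝ))*B₁*B₁*B₃*c2*c2 + ((1/4 : ℝ))*B₁*B₁*B₂*B₂*B₃) * e8 + (((1/4 : ℝ))*B₁*B₂*c1*c3*c3 + ((1/4 : ℝ))*B₁*B₁*B₃*c2*c3) * e9 + (((-1/4 : ℝ))*B₁*B₃*c1*c1*c2 + ((-1/4 : ℝ))*B₁*B₁*B₁*B₃*c2) * e10 + (((-1/4 : ℝ))*B₁*B₃*c1*c2*c2 + ((1/4 : ℝ))*B₁*B₁*B₂*c2*c3) * e11 + (((1/4 : ℝ))*B₂*B₃*B₃*c1*c1 + ((-1/4 : ℝ))*B₁*B₃*c1*c2*c3 + ((1/4 : ℝ))*B₁*B₁*B₂*c3*c3 + ((1/4 : ℝ))*B₁*B₁*B₂*B₃*B₃) * e12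
    exact (mul_eq_zero.mp hz).resolve_left hP
  have z5 : b2 = 0 := by
    have hz : ((B₁*B₂*B₃)^2 + (c1*B₂*B₃)^2 + (c2*B₁*B₃)^2 + (c3*B₁*B₂)^2) * b2 = 0 := by
      linear_combination (((-1/4 : ℝ))*B₂*B₃*c1*c1*c2 + ((-1/4 : ℝ))*B₁*B₂*B₂*c1*c3) * e1 + (((-1/4 : ℝ))*B₂*B₃*c1*c2*c2 + ((-1/4 : ℝ))*B₂*B₂*B₂*B₃*c1) * e2 + (((-1/4 : ℝ))*B₂*B₃*c1*c2*c3 + ((-1/4 : ℝ))*B₁*B₃*B₃*c2*c2 + ((-1/4 : ℝ))*B₁*B₂*B₂*c3*c3 + ((-1/4 : ℝ))*B₁*B₂*B₂*B₃*B₃) * e3 + (((-1/4 : ℝ))*B₁*B₂*B₃*c1*c2 + ((-1/4 : ℝ))*B₁*B₁*B₂*B₂*c3) * e4 + (((-1/4 : ℝ))*B₁*B₂*B₃*c2*c2 + ((-1/4 : ℝ))*B₁*B₂*B₂*B₂*B₃) * e5 + (((1/4 : ℝ))*B₂*B₂*B₃*B₃*c1 + ((-1/4 : ℝ))*B₁*B₂*B₃*c2*c3)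 * e6 + (((-1/4 : ℝ))*B₂*B₂*B₃*c1*c1 + ((1/4 : ℝ))*B₁*B₂*c1*c2*c3 + ((-1/4 : ℝ))*B₁*B₁*B₃*c2*c2 + ((-1/4 : ℝ))*B₁*B₁*B₂*B₂*B₃) * e7 + (((1/4 : ℝ))*B₁*B₂*c2*c2*c3 + ((1/4 : ℝ))*B₁*B₂*B₂*B₂*c3) * e8 + (((-1/4 : ℝ))*B₂*B₂*B₃*c1*c3 + ((1/4 : ℝ))*B₁*B₂*c2*c3*c3) * e9 + (((-1/4 : ℝ))*B₁*B₃*c1*c2*c2 + ((-1/4 : ℝ))*B₁*B₁*B₂*c2*c3) * e10 + (((-1/4 : ℝ))*B₁*B₃*c2*c2*c2 + ((-1/4 : ℝ))*B₁*B₂*B₂*B₃*c2) * e11 + (((1/4 : ℝ))*B₂*B₃*B₃*c1*c2 + ((-1/4 : ℝ))*B₁*B₃*c2*c2*c3) * e12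
    exact (mul_eq_zero.mp hz).resolve_left hP
  have z6 : g2 = 0 := by
    have hz : ((B₁*B₂*B₃)^2 + (c1*B₂*B₃)^2 + (c2*B₁*B₃)^2 + (c3*B₁*B₂)^2) * g2 = 0 := by
      linear_combination (((-1/4 : ℝ))*B₂*B₃*c1*c1*c3 + ((1/4 : ℝ))*B₁*B₃*B₃*c1*c2) * e1 + (((-1/4 : ℝ))*B₂*B₃*c1*c2*c3 + ((1/4 : ℝ))*B₁*B₃*B₃*c2*c2 + ((1/4 : ℝ))*B₁*B₂*B₂*c3*c3 + ((1/4 : ℝ))*B₁*B₂*B₂*B₃*B₃) * e2 + (((-1/4 : ℝ))*B₂*B₃*c1*c3*c3 + ((-1/4 : ℝ))*B₂*B₃*B₃*B₃*c1) * e3 + (((-1/4 : ℝ))*B₁*B₂*B₃*c1*c3 + ((1/4 : ℝ))*B₁*B₁*B₃*B₃*c2) * e4 + (((-1/4 : ℝ))*B₂*B₂*B₃*B₃*c1 + ((-1/4 : ℝ))*B₁*B₂*B₃*c2*c3) * e5 + (((-1/4 : ℝ))*B₁*B₂*B₃*c3*c3 + ((-1/4 : ℝ))*B₁*B₂*B₃*B₃*B₃)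 * e6 + (((1/4 : ℝ))*B₁*B₂*c1*c3*c3 + ((-1/4 : ℝ))*B₁*B₁*B₃*c2*c3) * e7 + (((1/4 : ℝ))*B₂*B₂*B₃*c1*c3 + ((1/4 : ℝ))*B₁*B₂*c2*c3*c3) * e8 + (((1/4 : ℝ))*B₁*B₂*c3*c3*c3 + ((1/4 : ℝ))*B₁*B₂*B₃*B₃*c3) * e9 + (((-1/4 : ℝ))*B₂*B₃*B₃*c1*c1 + ((-1/4 : ℝ))*B₁*B₃*c1*c2*c3 + ((-1/4 : ℝ))*B₁*B₁*B₂*c3*c3 + ((-1/4 : ℝ))*B₁*B₁*B₂*B₃*B₃) * e10 + (((-1/4 : ℝ))*B₂*B₃*B₃*c1*c2 + ((-1/4 : ℝ))*B₁*B₃*c2*c2*c3) * e11 + (((-1/4 : ℝ))*B₁*B₃*c2*c3*c3 + ((-1/4 : ℝ))*B₁*B₃*B₃*B₃*c2) * e12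
    exact (mul_eq_zero.mp hz).resolve_left hP
  have z7 : a3 = 0 := by
    have hz : ((B₁*B₂*B₃)^2 + (c1*B₂*B₃)^2 + (c2*B₁*B₃)^2 + (c3*B₁*B₂)^2) * a3 = 0 := by
      linear_combination (((-1/4 : ℝ))*B₁*B₃*c1*c1*c2 + ((-1/4 : ℝ))*B₁*B₁*B₁*B₃*c2) * e1 + (((-1/4 : ℝ))*B₁*B₃*c1*c2*c2 + ((1/4 : ℝ))*B₁*B₁*B₂*c2*c3) * e2 + (((1/4 : ℝ))*B₂*B₃*B₃*c1*c1 + ((-1/4 : ℝ))*B₁*B₃*c1*c2*c3 + ((1/4 : ℝ))*B₁*B₁*B₂*c3*c3 + ((1/4 : ℝ))*B₁*B₁*B₂*B₃*B₃) * e3 + (((-1/4 : ℝ))*B₁*B₂*c1*c1*c3 + ((-1/4 : ℝ))*B₁*B₁*B₁*B₂*c3) * e4 + (((-1/4 : ℝ))*B₂*B₂*B₃*c1*c1 + ((-1/4 : ℝ))*B₁*B₂*c1*c2*c3 + ((-1/4 : ℝ))*B₁*B₁*B₃*c2*c2 + ((-1/4 : ℝ))*B₁*B₁*B₂*B₂*B₃)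 * e5 + (((-1/4 : ℝ))*B₁*B₂*c1*c3*c3 + ((-1/4 : ℝ))*B₁*B₁*B₃*c2*c3) * e6 + (((-1/4 : ℝ))*B₁*B₂*B₃*c1*c1 + ((-1/4 : ℝ))*B₁*B₁*B₁*B₂*B₃) * e7 + (((-1/4 : ℝ))*B₁*B₂*B₃*c1*c2 + ((1/4 : ℝ))*B₁*B₁*B₂*B₂*c3) * e8 + (((-1/4 : ℝ))*B₁*B₂*B₃*c1*c3 + ((-1/4 : ℝ))*B₁*B₁*B₃*B₃*c2) * e9 + (((1/4 : ℝ))*B₂*B₃*c1*c1*c1 + ((1/4 : ℝ))*B₁*B₁*B₂*B₃*c1) * e10 + (((1/4 : ℝ))*B₂*B₃*c1*c1*c2 + ((-1/4 : ℝ))*B₁*B₂*B₂*c1*c3) * e11 + (((1/4 : ℝ))*B₂*B₃*c1*c1*c3 + ((1/4 : ℝ))*B₁*B₃*B₃*c1*c2) * e12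
    exact (mul_eq_zero.mp hz).resolve_left hP
  have z8 : b3 = 0 := by
    have hz : ((B₁*B₂*B₃)^2 + (c1*B₂*B₃)^2 + (c2*B₁*B₃)^2 + (c3*B₁*B₂)^2) * b3 = 0 := by
      linear_combination (((-1/4 : ℝ))*B₁*B₃*c1*c2*c2 + ((-1/4 : ℝ))*B₁*B₁*B₂*c2*c3) * e1 + (((-1/4 : ℝ))*B₁*B₃*c2*c2*c2 + ((-1/4 : ℝ))*B₁*B₂*B₂*B₃*c2) * e2 + (((1/4 : ℝ))*B₂*B₃*B₃*c1*c2 + ((-1/4 : ℝ))*B₁*B₃*c2*c2*c3) * e3 + (((1/4 : ℝ))*B₂*B₂*B₃*c1*c1 + ((-1/4 : ℝ))*B₁*B₂*c1*c2*c3 + ((1/4 : ℝ))*B₁*B₁*B₃*c2*c2 + ((1/4 : ℝ))*B₁*B₁*B₂*B₂*B₃) * e4 + (((-1/4 : ℝ))*B₁*B₂*c2*c2*c3 + ((-1/4 : ℝ))*B₁*B₂*B₂*B₂*c3) * e5 + (((1/4 : ℝ))*B₂*B₂*B₃*c1*c3 + ((-1/4 : ℝ))*B₁*B₂*c2*c3*c3)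 * e6 + (((-1/4 : ℝ))*B₁*B₂*B₃*c1*c2 + ((-1/4 : ℝ))*B₁*B₁*B₂*B₂*c3) * e7 + (((-1/4 : ℝ))*B₁*B₂*B₃*c2*c2 + ((-1/4 : ℝ))*B₁*B₂*B₂*B₂*B₃) * e8 + (((1/4 : ℝ))*B₂*B₂*B₃*B₃*c1 + ((-1/4 : ℝ))*B₁*B₂*B₃*c2*c3) * e9 + (((1/4 : ℝ))*B₂*B₃*c1*c1*c2 + ((1/4 : ℝ))*B₁*B₂*B₂*c1*c3) * e10 + (((1/4 : ℝ))*B₂*B₃*c1*c2*c2 + ((1/4 : ℝ))*B₂*B₂*B₂*B₃*c1) * e11 + (((1/4 : ℝ))*B₂*B₃*c1*c2*c3 + ((1/4 : ℝ))*B₁*B₃*B₃*c2*c2 + ((1/4 : ℝ))*B₁*B₂*B₂*c3*c3 + ((1/4 : ℝ))*B₁*B₂*B₂*B₃*B₃) * e12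
    exact (mul_eq_zero.mp hz).resolve_left hP
  have z9 : g3 = 0 := by
    have hz : ((B₁*B₂*B₃)^2 + (c1*B₂*B₃)^2 + (c2*B₁*B₃)^2 + (c3*B₁*B₂)^2) * g3 = 0 := by
      linear_combination (((-1/4 : ℝ))*B₂*B₃*B₃*c1*c1 + ((-1/4 : ℝ))*B₁*B₃*c1*c2*c3 + ((-1/4 : ℝ))*B₁*B₁*B₂*c3*c3 + ((-1/4 : ℝ))*B₁*B₁*B₂*B₃*B₃) * e1 + (((-1/4 : ℝ))*B₂*B₃*B₃*c1*c2 + ((-1/4 : ℝ))*B₁*B₃*c2*c2*c3) * e2 + (((-1/4 : ℝ))*B₁*B₃*c2*c3*c3 + ((-1/4 : ℝ))*B₁*B₃*B₃*B₃*c2) * e3 + (((-1/4 : ℝ))*B₁*B₂*c1*c3*c3 + ((1/4 : ℝ))*B₁*B₁*B₃*c2*c3) * e4 + (((-1/4 : ℝ))*B₂*B₂*B₃*c1*c3 + ((-1/4 : ℝ))*B₁*B₂*c2*c3*c3) * e5 + (((-1/4 : ℝ))*B₁*B₂*c3*c3*c3 + ((-1/4 : ℝ))*B₁*B₂*B₃*B₃*c3)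 * e6 + (((-1/4 : ℝ))*B₁*B₂*B₃*c1*c3 + ((1/4 : ℝ))*B₁*B₁*B₃*B₃*c2) * e7 + (((-1/4 : ℝ))*B₂*B₂*B₃*B₃*c1 + ((-1/4 : ℝ))*B₁*B₂*B₃*c2*c3) * e8 + (((-1/4 : ℝ))*B₁*B₂*B₃*c3*c3 + ((-1/4 : ℝ))*B₁*B₂*B₃*B₃*B₃) * e9 + (((1/4 : ℝ))*B₂*B₃*c1*c1*c3 + ((-1/4 : ℝ))*B₁*B₃*B₃*c1*c2) * e10 + (((1/4 : ℝ))*B₂*B₃*c1*c2*c3 + ((-1/4 : ℝ))*B₁*B₃*B₃*c2*c2 + ((-1/4 : ℝ))*B₁*B₂*B₂*c3*c3 + ((-1/4 : ℝ))*B₁*B₂*B₂*B₃*B₃) * e11 + (((1/4 : ℝ))*B₂*B₃*c1*c3*c3 + ((1/4 : ℝ))*B₂*B₃*B₃*B₃*c1) * e12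
    exact (mul_eq_zero.mp hz).resolve_left hP
  have z10 : a4 = 0 := by
    have hz : ((B₁*B₂*B₃)^2 + (c1*B₂*B₃)^2 + (c2*B₁*B₃)^2 + (c3*B₁*B₂)^2) * a4 = 0 := by
      linear_combination (((-1/4 : ℝ))*B₁*B₂*c1*c1*c3 + ((-1/4 : ℝ))*B₁*B₁*B₁*B₂*c3) * e1 + (((-1/4 : ℝ))*B₂*B₂*B₃*c1*c1 + ((-1/4 : ℝ))*B₁*B₂*c1*c2*c3 + ((-1/4 : ℝ))*B₁*B₁*B₃*c2*c2 + ((-1/4 : ℝ))*B₁*B₁*B₂*B₂*B₃) * e2 + (((-1/4 : ℝ))*B₁*B₂*c1*c3*c3 + ((-1/4 : ℝ))*B₁*B₁*B₃*c2*c3) * e3 + (((1/4 : ℝ))*B₁*B₃*c1*c1*c2 + ((1/4 : ℝ))*B₁*B₁*B₁*B₃*c2) * e4 + (((1/4 : ℝ))*B₁*B₃*c1*c2*c2 + ((-1/4 : ℝ))*B₁*B₁*B₂*c2*c3) * e5 + (((-1/4 : ℝ))*B₂*B₃*B₃*c1*c1 + ((1/4 : ℝ))*B₁*B₃*c1*c2*c3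 + ((-1/4 : ℝ))*B₁*B₁*B₂*c3*c3 + ((-1/4 : ℝ))*B₁*B₁*B₂*B₃*B₃) * e6 + (((-1/4 : ℝ))*B₂*B₃*c1*c1*c1 + ((-1/4 : ℝ))*B₁*B₁*B₂*B₃*c1) * e7 + (((-1/4 : ℝ))*B₂*B₃*c1*c1*c2 + ((1/4 : ℝ))*B₁*B₂*B₂*c1*c3) * e8 + (((-1/4 : ℝ))*B₂*B₃*c1*c1*c3 + ((-1/4 : ℝ))*B₁*B₃*B₃*c1*c2) * e9 + (((-1/4 : ℝ))*B₁*B₂*B₃*c1*c1 + ((-1/4 : ℝ))*B₁*B₁*B₁*B₂*B₃) * e10 + (((-1/4 : ℝ))*B₁*B₂*B₃*c1*c2 + ((1/4 : ℝ))*B₁*B₁*B₂*B₂*c3) * e11 + (((-1/4 : ℝ))*B₁*B₂*B₃*c1*c3 + ((-1/4 : ℝ))*B₁*B₁*B₃*B₃*c2) * e12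
    exact (mul_eq_zero.mp hz).resolve_left hP
  have z11 : b4 = 0 := by
    have hz : ((B₁*B₂*B₃)^2 + (c1*B₂*B₃)^2 + (c2*B₁*B₃)^2 + (c3*B₁*B₂)^2) * b4 = 0 := by
      linear_combination (((1/4 : ℝ))*B₂*B₂*B₃*c1*c1 + ((-1/4 : ℝ))*B₁*B₂*c1*c2*c3 + ((1/4 : ℝ))*B₁*B₁*B₃*c2*c2 + ((1/4 : ℝ))*B₁*B₁*B₂*B₂*B₃) * e1 + (((-1/4 : ℝ))*B₁*B₂*c2*c2*c3 + ((-1/4 : ℝ))*B₁*B₂*B₂*B₂*c3) * e2 + (((1/4 : ℝ))*B₂*B₂*B₃*c1*c3 + ((-1/4 : ℝ))*B₁*B₂*c2*c3*c3) * e3 + (((1/4 : ℝ))*B₁*B₃*c1*c2*c2 + ((1/4 : ℝ))*B₁*B₁*B₂*c2*c3) * e4 + (((1/4 : ℝ))*B₁*B₃*c2*c2*c2 + ((1/4 : ℝ))*B₁*B₂*B₂*B₃*c2) * e5 + (((-1/4 : ℝ))*B₂*B₃*B₃*c1*c2 + ((1/4 : ℝ))*B₁*B₃*c2*c2*c3)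 * e6 + (((-1/4 : ℝ))*B₂*B₃*c1*c1*c2 + ((-1/4 : ℝ))*B₁*B₂*B₂*c1*c3) * e7 + (((-1/4 : ℝ))*B₂*B₃*c1*c2*c2 + ((-1/4 : ℝ))*B₂*B₂*B₂*B₃*c1) * e8 + (((-1/4 : ℝ))*B₂*B₃*c1*c2*c3 + ((-1/4 : ℝ))*B₁*B₃*B₃*c2*c2 + ((-1/4 : ℝ))*B₁*B₂*B₂*c3*c3 + ((-1/4 : ℝ))*B₁*B₂*B₂*B₃*B₃) * e9 + (((-1/4 : ℝ))*B₁*B₂*B₃*c1*c2 + ((-1/4 : ℝ))*B₁*B₁*B₂*B₂*c3) * e10 + (((-1/4 : ℝ))*B₁*B₂*B₃*c2*c2 + ((-1/4 : ℝ))*B₁*B₂*B₂*B₂*B₃) * e11 + (((1/4 : ℝ))*B₂*B₂*B₃*B₃*c1 + ((-1/4 : ℝ))*B₁*B₂*B₃*c2*c3) * e12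
    exact (mul_eq_zero.mp hz).resolve_left hP
  have z12 : g4 = 0 := by
    have hz : ((B₁*B₂*B₃)^2 + (c1*B₂*B₃)^2 + (c2*B₁*B₃)^2 + (c3*B₁*B₂)^2) * g4 = 0 := by
      linear_combination (((-1/4 : ℝ))*B₁*B₂*c1*c3*c3 + ((1/4 : ℝ))*B₁*B₁*B₃*c2*c3) * e1 + (((-1/4 : ℝ))*B₂*B₂*B₃*c1*c3 + ((-1/4 : ℝ))*B₁*B₂*c2*c3*c3) * e2 + (((-1/4 : ℝ))*B₁*B₂*c3*c3*c3 + ((-1/4 : ℝ))*B₁*B₂*B₃*B₃*c3) * e3 + (((1/4 : ℝ))*B₂*B₃*B₃*c1*c1 + ((1/4 : ℝ))*B₁*B₃*c1*c2*c3 + ((1/4 : ℝ))*B₁*B₁*B₂*c3*c3 + ((1/4 : ℝ))*B₁*B₁*B₂*B₃*B₃) * e4 + (((1/4 : ℝ))*B₂*B₃*B₃*c1*c2 + ((1/4 : ℝ))*B₁*B₃*c2*c2*c3) * e5 + (((1/4 : ℝ))*B₁*B₃*c2*c3*c3 + ((1/4 : ℝ))*B₁*B₃*B₃*B₃*c2)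 * e6 + (((-1/4 : ℝ))*B₂*B₃*c1*c1*c3 + ((1/4 : ℝ))*B₁*B₃*B₃*c1*c2) * e7 + (((-1/4 : ℝ))*B₂*B₃*c1*c2*c3 + ((1/4 : ℝ))*B₁*B₃*B₃*c2*c2 + ((1/4 : ℝ))*B₁*B₂*B₂*c3*c3 + ((1/4 : ℝ))*B₁*B₂*B₂*B₃*B₃) * e8 + (((-1/4 : ℝ))*B₂*B₃*c1*c3*c3 + ((-1/4 : ℝ))*B₂*B₃*B₃*B₃*c1) * e9 + (((-1/4 : ℝ))*B₁*B₂*B₃*c1*c3 + ((1/4 : ℝ))*B₁*B₁*B₃*B₃*c2) * e10 + (((-1/4 : ℝ))*B₂*B₂*B₃*B₃*c1 + ((-1/4 : ℝ))*B₁*B₂*B₃*c2*c3) * e11 + (((-1/4 : ℝ))*B₁*B₂*B₃*c3*c3 + ((-1/4 : ℝ))*B₁*B₂*B₃*B₃*B₃) * e12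
    exact (mul_eq_zero.mp hz).resolve_left hP
  refine ⟨?_, ?_, ?_, ?_⟩
  · rw [hp1, z1, z2, z3]; simp
  · rw [hp2, z4, z5, z6]; simp
  · rw [hp3, z7, z8, z9]; simp
  · rw [hp4, z10, z11, z12]; simp
end
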